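/- arXiv:1510.02075 — 4 statements merged into one kernel-verified Lean document; each statement's English description precedes it below -/
import Mathlib

section
/- Let G be a cubic graph and L its colored line graph. A cyclic sequence of edges C = (e_1, e_2, ..., e_k) of G forms a rainbow cycle in L if and only if C is a cycle in G (i.e., the e_i are the consecutive edges of a cycle of G). -/
open scoped Classical

noncomputable section

/-- The degree of a vertex: the number of its neighbors. -/
noncomputable def vdeg {V : Type*} (G : SimpleGraph V) (x : V) : ℕ :=
  (G.neighborSet x).ncard

/-- The line graph of `G`, with vertex set the edges of `G` (realized inside `Sym2 V`;
non-edges of `G` are isolated vertices): two edges of `G` are adjacent iff they are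
distinct and share an endpoint in `G`. -/
def lineG {V : Type*} (G : SimpleGraph V) : SimpleGraph (Sym2 V) where
  Adj e f := e ≠ f ∧ e ∈ G.edgeSet ∧ f ∈ G.edgeSet ∧ ∃ v : V, v ∈ e ∧ v ∈ f
  symm := by
    constructor
    rintro e f ⟨hne, he, hf, v, hv1, hv2⟩
    exact ⟨hne.symm, hf, he, v, hv2, hv1⟩
  loopless := by
    constructor
    rintro e ⟨hne, -⟩
    exact hne rfl

/-- Two edges of the line graph have the same color iff there is a vertex of `G`
(the color) belonging to all the `G`-edges involved: the color of the line-graph edge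
`{e, f}` is the common endpoint of `e` and `f` in `G`. -/
def sameLColor {V : Type*} (d d' : Sym2 (Sym2 V)) : Prop :=
  ∃ v : V, (∀ e ∈ d, v ∈ e) ∧ ∀ e ∈ d', v ∈ e

/-!
Consecutive edges `e (i - 1)` and `e i` of a rainbow cycle of `L(G)` meet in a vertex `v i`, the
color of that edge of `L(G)`; rainbowness says exactly that the `v i` are pairwise distinct, so
`e i = v i v (i + 1)` and the `e i` trace a cycle of `G`. Conversely, along a cycle of length at
least three the only common vertex of two consecutive edges is the vertex between them, so distinct
edges of `L(G)` receive distinct colors.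
-/

section

open SimpleGraph Function

variable {V : Type*} {G : SimpleGraph V} {n : ℕ}

theorem Fin.add_one_add_one_ne_self (i : Fin (n + 3)) : i + 1 + 1 ≠ i := by
  rw [add_assoc, Ne, add_eq_left, Fin.ext_iff, Fin.val_add, Fin.val_one, Fin.val_zero,
    Nat.mod_eq_of_lt (by omega)]
  omega

theorem sameLColor_mk_iff {a b c d : Sym2 V} :
    sameLColor s(a, b) s(c, d) ↔ ∃ x, (x ∈ a ∧ x ∈ b) ∧ x ∈ c ∧ x ∈ d := by
  simp [sameLColor, Sym2.mem_iff]

def IsRainbowCycle (G : SimpleGraph V) [NeZero n] (e : Fin n → Sym2 V) : Prop :=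
  Injective e ∧ (∀ i, (lineG G).Adj (e i) (e (i + 1))) ∧
    ∀ i j : Fin n, i ≠ j → ¬ sameLColor s(e i, e (i + 1)) s(e j, e (j + 1))

theorem IsRainbowCycle.exists_vertices [NeZero n] {e : Fin n → Sym2 V} (h : IsRainbowCycle G e) :
    ∃ v : Fin n → V, Injective v ∧ (∀ i, G.Adj (v i) (v (i + 1))) ∧
      e = fun i ↦ s(v i, v (i + 1)) := by
  obtain ⟨-, hadj, hrb⟩ := h
  have hcommon (i : Fin n) : ∃ x, x ∈ e (i - 1) ∧ x ∈ e i := by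
    obtain ⟨-, -, -, x, hx, hx'⟩ := hadj (i - 1)
    exact ⟨x, hx, by rwa [sub_add_cancel] at hx'⟩
  choose v hv_prev hv using hcommon
  have hv_inj : Injective v := by
    intro i j hij
    by_contra hne
    refine hrb (i - 1) (j - 1) (fun h ↦ hne (sub_left_inj.mp h)) (sameLColor_mk_iff.mpr ?_)
    simp only [sub_add_cancel]
    exact ⟨v i, ⟨hv_prev i, hv i⟩, hij ▸ hv_prev j, hij ▸ hv j⟩
  have he (i : Fin n) : e i = s(v i, v (i + 1)) := by
    have hne : i ≠ i + 1 := fun h ↦ (hadj i).1 (congrArg e h)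
    refine (Sym2.mem_and_mem_iff (hv_inj.ne hne)).mp ⟨hv i, ?_⟩
    simpa using hv_prev (i + 1)
  refine ⟨v, hv_inj, fun i ↦ ?_, funext he⟩
  simpa [he i] using (hadj i).2.1

theorem injective_mk_succ_of_injective {v : Fin (n + 3) → V} (hv : Injective v) :
    Injective fun i ↦ s(v i, v (i + 1)) := by
  intro i j h
  rcases Sym2.eq_iff.mp h with ⟨hij, -⟩ | ⟨hij, hji⟩
  · exact hv hij
  · obtain rfl := hv hji
    exact absurd (hv hij) (Fin.add_one_add_one_ne_self i).symm

theorem eq_of_mem_mk_succ_of_mem_mk_succ {v : Fin (n + 3) → V} (hv : Injective v) {x : V}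
    (i : Fin (n + 3)) (h : x ∈ s(v i, v (i + 1))) (h' : x ∈ s(v (i + 1), v (i + 1 + 1))) :
    x = v (i + 1) := by
  rw [Sym2.mem_iff] at h h'
  rcases h with rfl | rfl
  · rcases h' with h' | h'
    · exact h'
    · exact absurd (hv h') (Fin.add_one_add_one_ne_self i).symm
  · rfl

theorem isRainbowCycle_of_injective {v : Fin (n + 3) → V} (hv : Injective v)
    (hadj : ∀ i, G.Adj (v i) (v (i + 1))) : IsRainbowCycle G fun i ↦ s(v i, v (i + 1)) := by
  have he := injective_mk_succ_of_injective hv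
  refine ⟨he, fun i ↦ ⟨he.ne (by simp), hadj i, hadj (i + 1), v (i + 1), by simp, by simp⟩, ?_⟩
  intro i j hij hcol
  obtain ⟨x, ⟨hxi, hxi'⟩, hxj, hxj'⟩ := sameLColor_mk_iff.mp hcol
  refine hij (add_right_cancel (b := 1) (hv ?_))
  rw [← eq_of_mem_mk_succ_of_mem_mk_succ hv i hxi hxi',
    ← eq_of_mem_mk_succ_of_mem_mk_succ hv j hxj hxj']

theorem exists_isCycle_edges_eq_ofFn {v : Fin (n + 3) → V} (hv : Injective v)
    (hadj : ∀ i, G.Adj (v i) (v (i + 1))) :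
    ∃ (u : V) (w : G.Walk u u), w.IsCycle ∧ w.edges = List.ofFn fun i ↦ s(v i, v (i + 1)) := by
  let φ : cycleGraph (n + 3) →g G :=
    ⟨v, fun {a b} hab ↦ by
      rcases cycleGraph_adj.mp hab with h | h <;> rw [sub_eq_iff_eq_add'] at h <;> subst h
      exacts [(hadj b).symm, hadj a]⟩
  -- `cycleGraph.cycle` runs through `0, -1, -2, …`, so we traverse its image backwards
  refine ⟨v 0, ((cycleGraph.cycle n).map φ).reverse,
    ((Walk.isCycle_map_iff_of_injective hv).mpr cycleGraph.isCycle_cycle).reverse, ?_⟩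
  refine List.ext_getElem (by simp) fun i hi _ ↦ ?_
  rw [Walk.length_edges, Walk.length_reverse, Walk.length_map, cycleGraph.length_cycle] at hi
  simp only [Walk.getElem_edges, List.getElem_ofFn, Walk.getVert_reverse, Walk.getVert_map,
    Walk.length_map, cycleGraph.length_cycle]
  rw [cycleGraph.getVert_cycle (by omega), cycleGraph.getVert_cycle (by omega)]
  congr 3 <;> refine congrArg v (Fin.ext ?_)
  · simp [show n + 3 - (n + 3 - i) = i by omega, Nat.mod_eq_of_lt hi]
  · simp [Fin.val_add, show n + 3 - (n + 2 - i) = i + 1 by omega]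

theorem SimpleGraph.Walk.IsCycle.exists_vertices_of_edges_eq_ofFn {u : V} {w : G.Walk u u}
    (hw : w.IsCycle) {e : Fin (n + 3) → Sym2 V} (h : w.edges = List.ofFn e) :
    ∃ v : Fin (n + 3) → V, Injective v ∧ (∀ i, G.Adj (v i) (v (i + 1))) ∧
      e = fun i ↦ s(v i, v (i + 1)) := by
  have hlen : w.length = n + 3 := by simpa using congrArg List.length h
  have hwrap (i : Fin (n + 3)) : w.getVert ↑(i + 1) = w.getVert (↑i + 1) := by
    rw [Fin.val_add_one]
    split_ifs with hi
    · simp [hi, ← hlen, Walk.getVert_length]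
    · rfl
  refine ⟨fun i ↦ w.getVert i, fun i j hij ↦ Fin.ext (hw.getVert_injOn' ?_ ?_ hij), fun i ↦ ?_,
    funext fun i ↦ ?_⟩
  · simp only [Set.mem_ofPred_eq, hlen]; omega
  · simp only [Set.mem_ofPred_eq, hlen]; omega
  · simp only [hwrap]
    exact w.adj_getVert_succ (by omega)
  · simp only [hwrap]
    rw [← Walk.getElem_edges (by simp [hlen]), List.getElem_of_eq h, List.getElem_ofFn]

end

theorem rainbow_cycle_in_lineGraph_iff_cycle_general {V : Type*}
    (G : SimpleGraph V)
    (k : ℕ) (e : Fin (k + 3) → Sym2 V) :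
    (Function.Injective e ∧ (∀ i, (lineG G).Adj (e i) (e (i + 1))) ∧
        ∀ i j : Fin (k + 3), i ≠ j →
          ¬ sameLColor s(e i, e (i + 1)) s(e j, e (j + 1))) ↔
      ∃ (u : V) (w : G.Walk u u), w.IsCycle ∧ w.edges = List.ofFn e := by
  constructor
  · intro h
    obtain ⟨v, hv, hadj, rfl⟩ := IsRainbowCycle.exists_vertices (G := G) h
    exact exists_isCycle_edges_eq_ofFn hv hadj
  · rintro ⟨u, w, hw, hedges⟩
    obtain ⟨v, hv, hadj, rfl⟩ := hw.exists_vertices_of_edges_eq_ofFn hedges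
    exact isRainbowCycle_of_injective hv hadj

/-- A cyclic sequence of edges `e₀, …, e_{k+2}` of a cubic graph `G` forms a rainbow
cycle in the colored line graph `L(G)` (the `e i` are pairwise distinct, consecutive ones
are adjacent in `L(G)`, and no two edges of the resulting cycle of `L(G)` have the same
color) if and only if the `e i` are the consecutive edges of a cycle of `G`. -/
theorem rainbow_cycle_in_lineGraph_iff_cycle {V : Type*} [Fintype V] [DecidableEq V]
    (G : SimpleGraph V) (hcubic : ∀ v, vdeg G v = 3)
    (k : ℕ) (e : Fin (k + 3) → Sym2 V) (he : ∀ i, e i ∈ G.edgeSet) :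
    (Function.Injective e ∧ (∀ i, (lineG G).Adj (e i) (e (i + 1))) ∧
        ∀ i j : Fin (k + 3), i ≠ j →
          ¬ sameLColor s(e i, e (i + 1)) s(e j, e (j + 1))) ↔
      ∃ (u : V) (w : G.Walk u u), w.IsCycle ∧ w.edges = List.ofFn e :=
  rainbow_cycle_in_lineGraph_iff_cycle_general G k e
end
end

section
/- Suppose G is a connected graph and H is obtained from G by contracting a triangle of G, where this triangle is not itself a block of G. If x is a cut vertex of G, then the image [x] of x under the contraction is a cut vertex of H. -/
open scoped Classical

noncomputable section

/-- `v` is a cut vertex of `G`: there are vertices `a, b ≠ v` that are connected in `G`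
but every walk from `a` to `b` passes through `v` (so removing `v` disconnects them). -/
def IsCutVertex {V : Type*} (G : SimpleGraph V) (v : V) : Prop :=
  ∃ a b : V, a ≠ v ∧ b ≠ v ∧ G.Reachable a b ∧ ∀ p : G.Walk a b, v ∈ p.support

/-! If the triangle avoids the cut vertex `x`, a pair of vertices separated by `x` in `G` maps to
a pair separated by `[x]` in `H`: a walk of `H` avoiding `[x]` lifts to a walk of `G` avoiding `x`,
because each fibre of the contraction is a clique. If `x` lies on the triangle, the separated pair
may meet the triangle and so collapse onto `[x]`; a 2-connected `S` strictly containing the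
triangle lets us first slide such an endpoint, avoiding `x`, to a vertex of `S` off the
triangle. -/

namespace SimpleGraph

variable {V W : Type*} {G : SimpleGraph V} {H : SimpleGraph W} {f : V → W}

theorem Reachable.map_of_adj (hf : ∀ u v, G.Adj u v → f u = f v ∨ H.Adj (f u) (f v))
    {u v : V} (h : G.Reachable u v) : H.Reachable (f u) (f v) := by
  obtain ⟨p⟩ := h
  induction p with
  | nil => rfl
  | @cons u c _ huc _ ih =>
    rcases hf u c huc with he | hadj
    · exact he ▸ ih
    · exact hadj.reachable.trans ih

theorem Walk.exists_lift (hfib : ∀ u v, f u = f v → u = v ∨ G.Adj u v)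
    (hedge : ∀ w w', H.Adj w w' → ∃ u v, f u = w ∧ f v = w' ∧ G.Adj u v)
    {w w' : W} (p : H.Walk w w') (u v : V) :
    f u = w → f v = w' → ∃ q : G.Walk u v, ∀ z ∈ q.support, f z ∈ p.support := by
  induction p generalizing u with
  | nil =>
    intro hu hv
    rcases hfib u v (hu.trans hv.symm) with rfl | huv
    · exact ⟨.nil, by simp [hu]⟩
    · exact ⟨huv.toWalk, by simp [hu, hv]⟩
  | @cons w₁ w₂ _ hw p ih =>
    intro hu hv
    obtain ⟨y, y', hy, hy', hyy'⟩ := hedge w₁ w₂ hw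
    obtain ⟨q, hq⟩ := ih y' hy' hv
    have hstep : ∀ z ∈ (Walk.cons hyy' q).support, f z ∈ (Walk.cons hw p).support := by
      simp only [Walk.support_cons, List.mem_cons, forall_eq_or_imp, hy, true_or, true_and]
      exact fun z hz => Or.inr (hq z hz)
    rcases hfib u y (hu.trans hy.symm) with rfl | huy
    · exact ⟨_, hstep⟩
    · refine ⟨Walk.cons huy (Walk.cons hyy' q), ?_⟩
      simpa [hu] using hstep

theorem exists_walk_notMem_support_of_preconnected_induce_diff {S : Set V} {x u v : V}
    (hS : (G.induce (S \ {x})).Preconnected) (hu : u ∈ S \ {x}) (hv : v ∈ S \ {x}) :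
    ∃ q : G.Walk u v, x ∉ q.support := by
  obtain ⟨p⟩ := hS ⟨u, hu⟩ ⟨v, hv⟩
  refine ⟨p.map (Embedding.induce (S \ {x})).toHom, fun hx => ?_⟩
  obtain ⟨z, -, hzx⟩ := List.mem_map.1 ((Walk.support_map _ _) ▸ hx)
  exact z.2.2 hzx

theorem mem_support_of_walks_notMem_support {x a b a' b' : V}
    (hsep : ∀ p : G.Walk a b, x ∈ p.support) (qa : G.Walk a a') (qb : G.Walk b b')
    (ha : x ∉ qa.support) (hb : x ∉ qb.support) (p : G.Walk a' b') : x ∈ p.support := by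
  have := hsep (qa.append (p.append qb.reverse))
  simp only [Walk.mem_support_append_iff, Walk.support_reverse, List.mem_reverse] at this
  tauto

theorem isCutVertex_apply (hf : ∀ u v, G.Adj u v → f u = f v ∨ H.Adj (f u) (f v))
    (hfib : ∀ u v, f u = f v → u = v ∨ G.Adj u v)
    (hedge : ∀ w w', H.Adj w w' → ∃ u v, f u = w ∧ f v = w' ∧ G.Adj u v)
    {x a b : V} (ha : f a ≠ f x) (hb : f b ≠ f x) (hab : G.Reachable a b)
    (hsep : ∀ p : G.Walk a b, x ∈ p.support) : IsCutVertex H (f x) := by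
  refine ⟨f a, f b, ha, hb, hab.map_of_adj hf, fun p => ?_⟩
  obtain ⟨q, hq⟩ := p.exists_lift hfib hedge a b rfl rfl
  exact hq x (hsep q)

theorem exists_walk_notMem_support_to_compl {S T : Set V} {x : V} (hTS : T ⊂ S) (hxT : x ∈ T)
    (hS : (G.induce (S \ {x})).Preconnected) {u : V} (hux : u ≠ x) :
    ∃ u' ∉ T, ∃ q : G.Walk u u', x ∉ q.support := by
  by_cases huT : u ∈ T
  · obtain ⟨s, hsS, hsT⟩ := Set.exists_of_ssubset hTS
    have hsx : s ≠ x := fun h => hsT (h ▸ hxT)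
    exact ⟨s, hsT, exists_walk_notMem_support_of_preconnected_induce_diff
      hS ⟨hTS.subset huT, hux⟩ ⟨hsS, hsx⟩⟩
  · exact ⟨u, huT, .nil, by simpa using hux.symm⟩

end SimpleGraph

theorem contract_triangle_cut_vertex_general {V W : Type*}
    (G : SimpleGraph V)
    (t₁ t₂ t₃ : V) (h12 : G.Adj t₁ t₂) (h23 : G.Adj t₂ t₃) (h13 : G.Adj t₁ t₃)
    (H : SimpleGraph W) (f : V → W)
    (hinj : ∀ x y : V, f x = f y →
      x = y ∨ (x ∈ ({t₁, t₂, t₃} : Set V) ∧ y ∈ ({t₁, t₂, t₃} : Set V)))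
    (hH : ∀ a b : W, H.Adj a b ↔ a ≠ b ∧ ∃ x y : V, f x = a ∧ f y = b ∧ G.Adj x y)
    (hnotblock : ∃ S : Set V, {t₁, t₂, t₃} ⊆ S ∧ ({t₁, t₂, t₃} : Set V) ≠ S ∧
      (G.induce S).Connected ∧ ∀ w ∈ S, (G.induce (S \ {w})).Connected)
    (x : V) (hx : IsCutVertex G x) : IsCutVertex H (f x) := by
  obtain ⟨a, b, hax, hbx, hab, hsep⟩ := hx
  have hclique : G.IsClique {t₁, t₂, t₃} := by
    simp [SimpleGraph.isClique_insert, h12, h13, h23]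
  have hfib : ∀ u v, f u = f v → u = v ∨ G.Adj u v := fun u v huv =>
    (em (u = v)).imp_right fun hne =>
      let ⟨hu, hv⟩ := (hinj u v huv).resolve_left hne
      hclique hu hv hne
  have hf : ∀ u v, G.Adj u v → f u = f v ∨ H.Adj (f u) (f v) := fun u v huv =>
    or_iff_not_imp_left.2 fun hne => (hH _ _).2 ⟨hne, u, v, rfl, rfl, huv⟩
  have hedge : ∀ w w', H.Adj w w' → ∃ u v, f u = w ∧ f v = w' ∧ G.Adj u v :=
    fun w w' h => ((hH w w').1 h).2
  by_cases hxT : x ∈ ({t₁, t₂, t₃} : Set V)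
  · obtain ⟨S, hTsub, hTne, -, hS⟩ := hnotblock
    have hTS : _ ⊂ S := hTsub.ssubset_of_ne hTne
    have hSx := (hS x (hTS.subset hxT)).preconnected
    obtain ⟨a', ha'T, qa, hqa⟩ :=
      SimpleGraph.exists_walk_notMem_support_to_compl hTS hxT hSx hax
    obtain ⟨b', hb'T, qb, hqb⟩ :=
      SimpleGraph.exists_walk_notMem_support_to_compl hTS hxT hSx hbx
    have hfx : ∀ u ∉ ({t₁, t₂, t₃} : Set V), f u ≠ f x := fun u hu h =>
      (hinj u x h).elim (fun h => hu (h ▸ hxT)) (fun h => hu h.1)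
    exact SimpleGraph.isCutVertex_apply hf hfib hedge (hfx a' ha'T) (hfx b' hb'T)
      (qa.reverse.reachable.trans (hab.trans qb.reachable))
      (SimpleGraph.mem_support_of_walks_notMem_support hsep qa qb hqa hqb)
  · have hfx : ∀ u ≠ x, f u ≠ f x := fun u hu h =>
      (hinj u x h).elim hu (fun h => hxT h.2)
    exact SimpleGraph.isCutVertex_apply hf hfib hedge (hfx a hax) (hfx b hbx) hab hsep

/-- Let `H` be obtained from a connected graph `G` by contracting a triangle
`t₁ t₂ t₃` of `G` (via a surjection `f` identifying exactly the three triangle vertices,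
adjacency in `H` being induced by adjacency in `G`), where the triangle is not itself a
block of `G` (there is a strictly larger 2-connected induced subgraph containing it).
If `x` is a cut vertex of `G`, then its image `f x` is a cut vertex of `H`. -/
theorem contract_triangle_cut_vertex {V W : Type*} [Fintype V] [Fintype W]
    (G : SimpleGraph V) (hG : G.Connected)
    (t₁ t₂ t₃ : V) (h12 : G.Adj t₁ t₂) (h23 : G.Adj t₂ t₃) (h13 : G.Adj t₁ t₃)
    (H : SimpleGraph W) (f : V → W) (hsurj : Function.Surjective f)
    (hf12 : f t₁ = f t₂) (hf13 : f t₁ = f t₃)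
    (hinj : ∀ x y : V, f x = f y →
      x = y ∨ (x ∈ ({t₁, t₂, t₃} : Set V) ∧ y ∈ ({t₁, t₂, t₃} : Set V)))
    (hH : ∀ a b : W, H.Adj a b ↔ a ≠ b ∧ ∃ x y : V, f x = a ∧ f y = b ∧ G.Adj x y)
    (hnotblock : ∃ S : Set V, {t₁, t₂, t₃} ⊆ S ∧ ({t₁, t₂, t₃} : Set V) ≠ S ∧
      (G.induce S).Connected ∧ ∀ w ∈ S, (G.induce (S \ {w})).Connected)
    (x : V) (hx : IsCutVertex G x) : IsCutVertex H (f x) :=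
  contract_triangle_cut_vertex_general G t₁ t₂ t₃ h12 h23 h13 H f hinj hH hnotblock x hx
end
end

section
/- If G is a good colored graph and R is a rainbow cycle in G, then the graph G \ R obtained by deleting the edges of R satisfies: every vertex has even degree, maximum degree at most 4, every triangle is rainbow or monochromatic, every nonisolated vertex has color degree exactly 2, and each color class spans at most three vertices. -/
open scoped Classical

noncomputable section

/-- The color degree of a vertex: the number of distinct colors on its incident edges. -/
noncomputable def colorDeg {V C : Type*} (G : SimpleGraph V) (c : Sym2 V → C) (x : V) : ℕ :=
  {α : C | ∃ y, G.Adj x y ∧ c s(x, y) = α}.ncard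

/-- Every triangle of `G` is monochromatic or rainbow. -/
def TriCond {V C : Type*} (G : SimpleGraph V) (c : Sym2 V → C) : Prop :=
  ∀ x y z : V, G.Adj x y → G.Adj y z → G.Adj x z →
    (c s(x, y) = c s(y, z) ∧ c s(y, z) = c s(x, z)) ∨
    (c s(x, y) ≠ c s(y, z) ∧ c s(y, z) ≠ c s(x, z) ∧ c s(x, y) ≠ c s(x, z))

/-- `v` is a cut vertex of Type X: it has degree 4, and there are pseudoblocks at `v`
(vertex sets `A`, `B` covering `V` with `A ∩ B = {v}` and every edge lying within `A` or
within `B`) such that `v` has two edges into each pseudoblock, the two edges into each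
pseudoblock having the same color. (Such a vertex is automatically a cut vertex, since
any path between the two sides must pass through `v`.) -/
def IsTypeX {V C : Type*} (G : SimpleGraph V) (c : Sym2 V → C) (v : V) : Prop :=
  vdeg G v = 4 ∧
  ∃ A B : Set V, A ∪ B = Set.univ ∧ A ∩ B = {v} ∧
    (∀ e ∈ G.edgeSet, (∀ x ∈ e, x ∈ A) ∨ (∀ x ∈ e, x ∈ B)) ∧
    (∃ a₁ a₂ : V, a₁ ≠ a₂ ∧ a₁ ∈ A ∧ a₂ ∈ A ∧ G.Adj v a₁ ∧ G.Adj v a₂ ∧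
      c s(v, a₁) = c s(v, a₂)) ∧
    (∃ b₁ b₂ : V, b₁ ≠ b₂ ∧ b₁ ∈ B ∧ b₂ ∈ B ∧ G.Adj v b₁ ∧ G.Adj v b₂ ∧
      c s(v, b₁) = c s(v, b₂))

/-- Properties (1)-(5) of a good colored graph: every vertex has even degree, maximum
degree at most 4, every triangle is rainbow or monochromatic, every nonisolated vertex
has color degree exactly 2, and each color class spans at most three vertices. -/
def IsGoodCore {V C : Type*} (G : SimpleGraph V) (c : Sym2 V → C) : Prop :=
  (∀ x, Even (vdeg G x)) ∧ (∀ x, vdeg G x ≤ 4) ∧ TriCond G c ∧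
  (∀ x, vdeg G x ≠ 0 → colorDeg G c x = 2) ∧
  (∀ α : C, {x : V | ∃ y, G.Adj x y ∧ c s(x, y) = α}.ncard ≤ 3)

/-- A good colored graph: properties (1)-(5) together with (6): no cut vertex of Type X. -/
def IsGood {V C : Type*} (G : SimpleGraph V) (c : Sym2 V → C) : Prop :=
  IsGoodCore G c ∧ ∀ v, ¬ IsTypeX G c v

/-
Deleting a rainbow cycle changes only the vertices on the cycle, and removes from each of them
two edges of distinct colors. Triangles and color classes of a subgraph are inherited from `G`,
and the degree of a cycle vertex drops by two, so it stays even and at most 4. If such a vertex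
keeps a positive degree, it had degree 4 and, by (4), exactly two colors; by (5) each color
occurs on at most two edges at a vertex, so each of the two colors occurs on exactly two edges,
and one edge of each color survives the deletion.
-/

open SimpleGraph

def colorNeighborSet {V C : Type*} (G : SimpleGraph V) (c : Sym2 V → C) (x : V) (α : C) :
    Set V :=
  {y | G.Adj x y ∧ c s(x, y) = α}

def colorSpan {V C : Type*} (G : SimpleGraph V) (c : Sym2 V → C) (α : C) : Set V :=
  {x | ∃ y, G.Adj x y ∧ c s(x, y) = α}

def IsGoodAt {V C : Type*} (G : SimpleGraph V) (c : Sym2 V → C) (x : V) : Prop :=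
  Even (vdeg G x) ∧ vdeg G x ≤ 4 ∧ (vdeg G x ≠ 0 → colorDeg G c x = 2)

section ColoredGraph

variable {V C : Type*} {G H : SimpleGraph V} {c : Sym2 V → C}

theorem TriCond.mono (h : TriCond G c) (hle : H ≤ G) : TriCond H c :=
  fun x y z hxy hyz hxz => h x y z (hle hxy) (hle hyz) (hle hxz)

theorem colorSpan_mono (hle : H ≤ G) (α : C) : colorSpan H c α ⊆ colorSpan G c α :=
  fun _ ⟨y, hy, hc⟩ => ⟨y, hle hy, hc⟩

theorem colorDeg_eq_ncard_image (x : V) :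
    colorDeg G c x = ((fun y => c s(x, y)) '' G.neighborSet x).ncard :=
  rfl

theorem vdeg_eq_of_neighborSet_eq {x : V} (h : H.neighborSet x = G.neighborSet x) :
    vdeg H x = vdeg G x :=
  congrArg Set.ncard h

theorem colorDeg_eq_of_neighborSet_eq {x : V} (h : H.neighborSet x = G.neighborSet x) :
    colorDeg H c x = colorDeg G c x := by
  rw [colorDeg_eq_ncard_image, colorDeg_eq_ncard_image, h]

theorem ncard_colorNeighborSet_le_two [Finite V] {x : V} {α : C}
    (h : (colorSpan G c α).ncard ≤ 3) : (colorNeighborSet G c x α).ncard ≤ 2 := by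
  rcases (colorNeighborSet G c x α).eq_empty_or_nonempty with hempty | ⟨y, hy, hcy⟩
  · simp [hempty]
  have hsub : insert x (colorNeighborSet G c x α) ⊆ colorSpan G c α := by
    rintro z (rfl | ⟨hz, hcz⟩)
    · exact ⟨y, hy, hcy⟩
    · exact ⟨x, hz.symm, Sym2.eq_swap ▸ hcz⟩
  have hx : x ∉ colorNeighborSet G c x α := fun hx => hx.1.ne rfl
  have := Set.ncard_le_ncard hsub
  rw [Set.ncard_insert_of_notMem hx] at this
  omega

/-- Otherwise the three edges at `x` other than `xy₁` would all have color `b`. -/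
theorem exists_adj_color_eq_of_vdeg_eq_four [Finite V] {x y₁ y₂ : V} {a b : C}
    (hdeg : vdeg G x = 4) (hcol : ∀ y, G.Adj x y → c s(x, y) = a ∨ c s(x, y) = b)
    (hb : (colorNeighborSet G c x b).ncard ≤ 2)
    (hy₁ : G.Adj x y₁) (hne : y₁ ≠ y₂) (hc₂ : c s(x, y₂) = b) :
    ∃ z, G.Adj x z ∧ z ≠ y₁ ∧ z ≠ y₂ ∧ c s(x, z) = a := by
  by_contra! h
  have hsub : G.neighborSet x \ {y₁} ⊆ colorNeighborSet G c x b := by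
    rintro z ⟨hz, hzy₁⟩
    refine ⟨hz, ?_⟩
    rcases eq_or_ne z y₂ with rfl | hzy₂
    · exact hc₂
    · exact (hcol z hz).resolve_left (h z hz hzy₁ hzy₂)
  have := Set.ncard_le_ncard hsub
  rw [Set.ncard_sdiff_singleton_of_mem (show y₁ ∈ G.neighborSet x from hy₁)] at this
  unfold vdeg at hdeg
  omega

theorem colorDeg_eq_two_of_neighborSet_eq_sdiff [Finite V] {x y₁ y₂ : V}
    (hN : H.neighborSet x = G.neighborSet x \ {y₁, y₂})
    (hdeg : vdeg G x = 4) (hcd : colorDeg G c x = 2)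
    (hmult : ∀ α, (colorNeighborSet G c x α).ncard ≤ 2)
    (hy₁ : G.Adj x y₁) (hy₂ : G.Adj x y₂) (hc : c s(x, y₁) ≠ c s(x, y₂)) :
    colorDeg H c x = 2 := by
  have hne : y₁ ≠ y₂ := by rintro rfl; exact hc rfl
  have hcolors : (fun y => c s(x, y)) '' G.neighborSet x = {c s(x, y₁), c s(x, y₂)} := by
    refine (Set.eq_of_subset_of_ncard_le ?_ ?_).symm
    · exact Set.pair_subset (Set.mem_image_of_mem _ hy₁) (Set.mem_image_of_mem _ hy₂)
    · rw [← colorDeg_eq_ncard_image, hcd, Set.ncard_pair hc]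
  have hcol : ∀ y, G.Adj x y → c s(x, y) = c s(x, y₁) ∨ c s(x, y) = c s(x, y₂) := by
    intro y hy
    have hmem : c s(x, y) ∈ (fun y => c s(x, y)) '' G.neighborSet x := ⟨y, hy, rfl⟩
    simpa [hcolors] using hmem
  have hH : ∀ z, G.Adj x z → z ≠ y₁ → z ≠ y₂ → H.Adj x z := by
    intro z hz hz₁ hz₂
    change z ∈ H.neighborSet x
    simp [hN, hz, hz₁, hz₂]
  obtain ⟨z₁, hz₁, hz₁y₁, hz₁y₂, hcz₁⟩ :=
    exists_adj_color_eq_of_vdeg_eq_four hdeg hcol (hmult _) hy₁ hne rfl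
  obtain ⟨z₂, hz₂, hz₂y₂, hz₂y₁, hcz₂⟩ := exists_adj_color_eq_of_vdeg_eq_four hdeg
    (fun y hy => (hcol y hy).symm) (hmult _) hy₂ hne.symm rfl
  have hcolorsH : (fun y => c s(x, y)) '' H.neighborSet x = {c s(x, y₁), c s(x, y₂)} := by
    refine subset_antisymm ?_ ?_
    · rw [← hcolors, hN]
      exact Set.image_mono Set.sdiff_subset
    · exact Set.pair_subset ⟨z₁, hH z₁ hz₁ hz₁y₁ hz₁y₂, hcz₁⟩ ⟨z₂, hH z₂ hz₂ hz₂y₁ hz₂y₂, hcz₂⟩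
  rw [colorDeg_eq_ncard_image, hcolorsH, Set.ncard_pair hc]

end ColoredGraph

namespace SimpleGraph.Walk

variable {V C : Type*} {G : SimpleGraph V} {u v : V}

theorem neighborSet_deleteEdges_edges (p : G.Walk u v) (x : V) :
    (G.deleteEdges {e | e ∈ p.edges}).neighborSet x =
      G.neighborSet x \ p.toSubgraph.neighborSet x := by
  ext y
  simp [adj_toSubgraph_iff_mem_edges]

theorem color_ne_of_mem_neighborSet_toSubgraph {c : Sym2 V → C} (p : G.Walk u v)
    (hrb : (p.edges.map c).Nodup) {x y₁ y₂ : V} (h₁ : y₁ ∈ p.toSubgraph.neighborSet x)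
    (h₂ : y₂ ∈ p.toSubgraph.neighborSet x) (hne : y₁ ≠ y₂) : c s(x, y₁) ≠ c s(x, y₂) :=
  fun h => hne (Sym2.congr_right.mp (List.inj_on_of_nodup_map hrb
    (adj_toSubgraph_iff_mem_edges.mp h₁) (adj_toSubgraph_iff_mem_edges.mp h₂) h))

end SimpleGraph.Walk

theorem IsGoodCore.isGoodAt_deleteEdges_of_isCycle {V C : Type*} [Finite V] {G : SimpleGraph V}
    {c : Sym2 V → C} (hG : IsGoodCore G c) {u : V} {R : G.Walk u u} (hR : R.IsCycle)
    (hrb : (R.edges.map c).Nodup) (x : V) :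
    IsGoodAt (G.deleteEdges {e | e ∈ R.edges}) c x := by
  obtain ⟨hEven, hMax, -, hCol, hSpan⟩ := hG
  have hN := R.neighborSet_deleteEdges_edges x
  by_cases hx : x ∈ R.support
  · obtain ⟨y₁, y₂, hne, hS⟩ :=
      Set.ncard_eq_two.mp (hR.ncard_neighborSet_toSubgraph_eq_two hx)
    have hy₁ : y₁ ∈ R.toSubgraph.neighborSet x := by simp [hS]
    have hy₂ : y₂ ∈ R.toSubgraph.neighborSet x := by simp [hS]
    have hdeg : vdeg (G.deleteEdges {e | e ∈ R.edges}) x + 2 = vdeg G x := by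
      rw [vdeg, hN, ← Set.ncard_pair hne, ← hS]
      exact Set.ncard_sdiff_add_ncard_of_subset (R.toSubgraph.neighborSet_subset x)
    obtain ⟨r, hr⟩ := hEven x
    have hle := hMax x
    refine ⟨⟨r - 1, by omega⟩, by omega, fun hpos => ?_⟩
    rw [hS] at hN
    exact colorDeg_eq_two_of_neighborSet_eq_sdiff hN (by omega) (hCol x (by omega))
      (fun α => ncard_colorNeighborSet_le_two (hSpan α))
      (R.toSubgraph.neighborSet_subset x hy₁) (R.toSubgraph.neighborSet_subset x hy₂)
      (R.color_ne_of_mem_neighborSet_toSubgraph hrb hy₁ hy₂ hne)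
  · have hS : R.toSubgraph.neighborSet x = ∅ :=
      Set.eq_empty_of_forall_notMem fun _ hy => hx (Walk.mem_support_of_adj_toSubgraph hy)
    rw [hS, Set.sdiff_empty] at hN
    rw [IsGoodAt, vdeg_eq_of_neighborSet_eq hN, colorDeg_eq_of_neighborSet_eq hN]
    exact ⟨hEven x, hMax x, hCol x⟩

theorem deleteRainbowCycle_isGoodCore_general {V C : Type*} [Fintype V]
    (G : SimpleGraph V) (c : Sym2 V → C) (hG : IsGood G c)
    (u : V) (R : G.Walk u u) (hR : R.IsCycle) (hrb : (R.edges.map c).Nodup) :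
    IsGoodCore (G.deleteEdges {e | e ∈ R.edges}) c := by
  obtain ⟨hcore, -⟩ := hG
  have hvertex := hcore.isGoodAt_deleteEdges_of_isCycle hR hrb
  have hle := G.deleteEdges_le {e | e ∈ R.edges}
  obtain ⟨-, -, hTri, -, hSpan⟩ := hcore
  exact ⟨fun x => (hvertex x).1, fun x => (hvertex x).2.1, hTri.mono hle,
    fun x => (hvertex x).2.2, fun α => (Set.ncard_le_ncard (colorSpan_mono hle α)).trans (hSpan α)⟩

/-- If `G` is a good colored graph and `R` is a rainbow cycle in `G`, then the graph
obtained by deleting the edges of `R` satisfies properties (1)-(5) of a good colored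
graph: every vertex has even degree, maximum degree at most 4, every triangle is rainbow
or monochromatic, every nonisolated vertex has color degree exactly 2, and each color
class spans at most three vertices. -/
theorem deleteRainbowCycle_isGoodCore {V C : Type*} [Fintype V] [DecidableEq V]
    (G : SimpleGraph V) (c : Sym2 V → C) (hG : IsGood G c)
    (u : V) (R : G.Walk u u) (hR : R.IsCycle) (hrb : (R.edges.map c).Nodup) :
    IsGoodCore (G.deleteEdges {e | e ∈ R.edges}) c :=
  deleteRainbowCycle_isGoodCore_general G c hG u R hR hrb
end
end

section
/- If G is a connected good colored graph in which every vertex is of Type II (degree 4, with two edges each of two distinct colors), and R is a rainbow cycle in G, then the graph G \ R obtained by deleting the edges of R is connected. -/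
open scoped Classical

noncomputable section

/-- A vertex of Type II: degree 4, with exactly two incident edges of each of two
distinct colors. -/
def IsTypeII {V C : Type*} (G : SimpleGraph V) (c : Sym2 V → C) (x : V) : Prop :=
  vdeg G x = 4 ∧ ∃ α β : C, α ≠ β ∧
    {y : V | G.Adj x y ∧ c s(x, y) = α}.ncard = 2 ∧
    {y : V | G.Adj x y ∧ c s(x, y) = β}.ncard = 2

/-- `G` is connected up to isolated vertices. -/
def ConnUpToIso {V : Type*} (G : SimpleGraph V) : Prop :=
  ∀ a b : V, vdeg G a ≠ 0 → vdeg G b ≠ 0 → G.Reachable a b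

/-!
Every edge `ab` lies in a monochromatic triangle: `a` and `b` are both of Type II, so each has
exactly two neighbours in the color of `ab`, and since that color class spans at most three
vertices, the second such neighbour of `a` is the second one of `b`. A rainbow cycle contains at
most one edge of each monochromatic triangle, so every deleted edge is bypassed by the other two
edges of its triangle.
-/

theorem SimpleGraph.Reachable.of_forall_adj {V : Type*} {G H : SimpleGraph V}
    (h : ∀ ⦃x y⦄, G.Adj x y → H.Reachable x y) {a b : V} (hab : G.Reachable a b) :
    H.Reachable a b := by
  simp only [SimpleGraph.reachable_iff_reflTransGen] at h hab ⊢
  exact Relation.reflTransGen_closed h _ _ hab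

section

variable {V C : Type*} {G : SimpleGraph V} {c : Sym2 V → C}

theorem IsTypeII.ncard_adj_color_eq_two {a b : V} (ha : IsTypeII G c a) (hab : G.Adj a b) :
    {y : V | G.Adj a y ∧ c s(a, y) = c s(a, b)}.ncard = 2 := by
  obtain ⟨hdeg, α, β, hαβ, hα, hβ⟩ := ha
  set Sα := {y : V | G.Adj a y ∧ c s(a, y) = α}
  set Sβ := {y : V | G.Adj a y ∧ c s(a, y) = β}
  have hdisj : Disjoint Sα Sβ :=
    Set.disjoint_left.2 fun _ h₁ h₂ => hαβ (h₁.2 ▸ h₂.2)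
  have hsub : Sα ∪ Sβ ⊆ G.neighborSet a := by
    rintro y (⟨h, _⟩ | ⟨h, _⟩) <;> exact h
  have hfin : (G.neighborSet a).Finite :=
    Set.finite_of_ncard_pos (by rw [vdeg] at hdeg; omega)
  have hcover : Sα ∪ Sβ = G.neighborSet a := by
    refine Set.eq_of_subset_of_ncard_le hsub ?_ hfin
    rw [Set.ncard_union_eq hdisj (hfin.subset fun _ h => h.1) (hfin.subset fun _ h => h.1),
      hα, hβ, ← vdeg, hdeg]
  rcases (hcover ▸ hab : b ∈ Sα ∪ Sβ) with ⟨_, h⟩ | ⟨_, h⟩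
  · rwa [h]
  · rwa [h]

theorem exists_monochromatic_triangle [Finite V]
    (hclass : ∀ α : C, {x : V | ∃ y, G.Adj x y ∧ c s(x, y) = α}.ncard ≤ 3) {a b : V}
    (ha : IsTypeII G c a) (hb : IsTypeII G c b) (hab : G.Adj a b) :
    ∃ w, G.Adj a w ∧ G.Adj w b ∧ c s(a, w) = c s(a, b) ∧ c s(w, b) = c s(a, b) := by
  have hba : c s(b, a) = c s(a, b) := congrArg c Sym2.eq_swap
  have hSb := hb.ncard_adj_color_eq_two hab.symm
  rw [hba] at hSb
  obtain ⟨z, ⟨haz, hcz⟩, hzb⟩ :=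
    Set.exists_ne_of_one_lt_ncard (by rw [ha.ncard_adj_color_eq_two hab]; norm_num) b
  obtain ⟨w, ⟨hbw, hcw⟩, hwa⟩ := Set.exists_ne_of_one_lt_ncard (by rw [hSb]; norm_num) a
  have hwz : w = z := by
    by_contra hwz
    have hsub : ({a, b, z, w} : Set V) ⊆ {x | ∃ y, G.Adj x y ∧ c s(x, y) = c s(a, b)} := by
      rintro x (rfl | rfl | rfl | rfl)
      exacts [⟨b, hab, rfl⟩, ⟨a, hab.symm, hba⟩, ⟨a, haz.symm, Sym2.eq_swap ▸ hcz⟩,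
        ⟨b, hbw.symm, Sym2.eq_swap ▸ hcw⟩]
    have hcard : ({a, b, z, w} : Set V).ncard = 4 := by
      rw [Set.ncard_insert_of_notMem (by simp [hab.ne, haz.ne, Ne.symm hwa]),
        Set.ncard_insert_of_notMem (by simp [Ne.symm hzb, hbw.ne]),
        Set.ncard_insert_of_notMem (by simp [Ne.symm hwz]), Set.ncard_singleton]
    have := Set.ncard_le_ncard hsub (Set.toFinite _)
    have := hclass (c s(a, b))
    omega
  subst hwz
  exact ⟨w, haz, hbw.symm, hcz, Sym2.eq_swap ▸ hcw⟩

theorem reachable_deleteEdges_of_monochromatic_triangle {S : Set (Sym2 V)} (hS : S.InjOn c)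
    {x y w : V} (hxy : G.Adj x y) (hxw : G.Adj x w) (hwy : G.Adj w y)
    (hcxw : c s(x, w) = c s(x, y)) (hcwy : c s(w, y) = c s(x, y)) :
    (G.deleteEdges S).Reachable x y := by
  by_cases hxyS : s(x, y) ∈ S
  · have hxwS : s(x, w) ∉ S := fun h => hwy.ne (Sym2.congr_right.1 (hS h hxyS hcxw))
    have hwyS : s(w, y) ∉ S := fun h => hxw.ne.symm (Sym2.congr_left.1 (hS h hxyS hcwy))
    exact (SimpleGraph.deleteEdges_adj.2 ⟨hxw, hxwS⟩).reachable.trans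
      (SimpleGraph.deleteEdges_adj.2 ⟨hwy, hwyS⟩).reachable
  · exact (SimpleGraph.deleteEdges_adj.2 ⟨hxy, hxyS⟩).reachable

end

theorem deleteRainbowCycle_connected_general {V C : Type*} [Fintype V]
    (G : SimpleGraph V) (c : Sym2 V → C) (hG : IsGood G c) (hconn : G.Connected)
    (hII : ∀ x, IsTypeII G c x)
    (u : V) (R : G.Walk u u) (hrb : (R.edges.map c).Nodup) :
    ConnUpToIso (G.deleteEdges {e | e ∈ R.edges}) := by
  have hrainbow : Set.InjOn c {e | e ∈ R.edges} := fun _ he _ he' =>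
    List.inj_on_of_nodup_map hrb he he'
  intro a b _ _
  refine (hconn.preconnected a b).of_forall_adj fun x y hxy => ?_
  obtain ⟨w, hxw, hwy, hcxw, hcwy⟩ :=
    exists_monochromatic_triangle hG.1.2.2.2.2 (hII x) (hII y) hxy
  exact reachable_deleteEdges_of_monochromatic_triangle hrainbow hxy hxw hwy hcxw hcwy

/-- If `G` is a connected good colored graph in which every vertex is of Type II and `R`
is a rainbow cycle in `G`, then the graph obtained by deleting the edges of `R` is
connected (up to isolated vertices). -/
theorem deleteRainbowCycle_connected {V C : Type*} [Fintype V] [DecidableEq V]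
    (G : SimpleGraph V) (c : Sym2 V → C) (hG : IsGood G c) (hconn : G.Connected)
    (hII : ∀ x, IsTypeII G c x)
    (u : V) (R : G.Walk u u) (hR : R.IsCycle) (hrb : (R.edges.map c).Nodup) :
    ConnUpToIso (G.deleteEdges {e | e ∈ R.edges}) :=
  deleteRainbowCycle_connected_general G c hG hconn hII u R hrb
end
end
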